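/- Let Q ⊆ 2^ω be measurable, σ a string, ε > 0, and Q^ε_σ = {X ∈ Q ∩ [σ] : ∀ n ≥ |σ|, μ_{X↾n}(Q) ≥ ε}. For any string τ ⪰ σ with [τ] ∩ Q^ε_σ ≠ ∅, we have μ_τ(Q^ε_σ) > μ_τ(Q) − ε. -/

import Mathlib

/-!
Call a string `ρ ⪰ τ` bad if `μ_ρ(Q) < ε`. A point of `Q ∩ [τ]` outside `Q^ε_σ` has a bad
prefix; that prefix extends `τ`, because the prefixes of length between `|σ|` and `|τ|` are
shared with the witness point, which has none. So such a point lies in the cylinder of a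
minimal bad string. These cylinders are pairwise disjoint and each carries `Q`-measure less
than `ε` times its own measure, hence `μ(Q ∩ [τ] \ Q^ε_σ) < ε μ[τ]` (strictly, also when there
is no bad string, since `ε > 0`).
-/

open MeasureTheory Filter
open scoped ENNReal

/-- The cylinder of infinite binary sequences extending the finite string `τ`. -/
def cyl (τ : List Bool) : Set (ℕ → Bool) := {X | ∀ i : Fin τ.length, X i = τ.get i}

/-- Relative measure `μ_τ(P) = μ(P ∩ [τ]) / μ([τ])`. -/
noncomputable def relMeas (μ : Measure (ℕ → Bool)) (τ : List Bool)
    (P : Set (ℕ → Bool)) : ℝ≥0∞ := μ (P ∩ cyl τ) / μ (cyl τ)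

/-- The length-`n` prefix of an infinite binary sequence. -/
def pre (X : ℕ → Bool) (n : ℕ) : List Bool := List.ofFn fun i : Fin n => X i

@[simp]
lemma pre_length (X : ℕ → Bool) (n : ℕ) : (pre X n).length = n := by simp [pre]

lemma mem_cyl_iff_pre_eq {X : ℕ → Bool} {τ : List Bool} : X ∈ cyl τ ↔ pre X τ.length = τ := by
  simp [cyl, pre, List.ext_get_iff, Fin.forall_iff]

lemma mem_cyl_pre (X : ℕ → Bool) (n : ℕ) : X ∈ cyl (pre X n) := by
  simp [cyl, pre]

lemma pre_prefix_pre (X : ℕ → Bool) {m n : ℕ} (h : m ≤ n) : pre X m <+: pre X n := by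
  rw [List.prefix_iff_eq_take]
  apply List.ext_getElem (by simp [h])
  intro i _ _
  simp [pre]

lemma cyl_subset_cyl {ρ ρ' : List Bool} (h : ρ <+: ρ') : cyl ρ' ⊆ cyl ρ := by
  intro X hX
  rw [mem_cyl_iff_pre_eq] at hX ⊢
  have hpre : pre X ρ.length <+: ρ' := hX ▸ pre_prefix_pre X h.length_le
  exact (List.prefix_of_prefix_length_le hpre h (by simp)).eq_of_length (by simp)

@[simp]
lemma cyl_nil : cyl [] = Set.univ := by
  simp [cyl]

lemma measurableSet_cyl (τ : List Bool) : MeasurableSet (cyl τ) := by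
  have : cyl τ = ⋂ i : Fin τ.length, (fun X : ℕ → Bool => X i) ⁻¹' {τ.get i} := by
    ext X; simp [cyl]
  rw [this]
  exact MeasurableSet.iInter fun i => measurable_pi_apply _ (measurableSet_singleton _)

lemma prefix_or_prefix_of_mem_cyl {X : ℕ → Bool} {ρ₁ ρ₂ : List Bool} (h₁ : X ∈ cyl ρ₁)
    (h₂ : X ∈ cyl ρ₂) : ρ₁ <+: ρ₂ ∨ ρ₂ <+: ρ₁ := by
  rw [mem_cyl_iff_pre_eq] at h₁ h₂
  rw [← h₁, ← h₂]
  exact (le_total ρ₁.length ρ₂.length).imp (pre_prefix_pre X) (pre_prefix_pre X)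

lemma pre_eq_pre_of_mem_cyl {X Y : ℕ → Bool} {τ : List Bool} (hX : X ∈ cyl τ) (hY : Y ∈ cyl τ)
    {n : ℕ} (hn : n ≤ τ.length) : pre X n = pre Y n := by
  apply List.ext_getElem (by simp)
  intro i hi _
  simp only [pre, List.getElem_ofFn]
  simp only [pre_length] at hi
  rw [hX ⟨i, by omega⟩, hY ⟨i, by omega⟩]

lemma prefix_pre_of_mem_cyl {X : ℕ → Bool} {τ : List Bool} (hX : X ∈ cyl τ) {n : ℕ}
    (hn : τ.length ≤ n) : τ <+: pre X n :=
  mem_cyl_iff_pre_eq.1 hX ▸ pre_prefix_pre X hn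

section MinimalPrefixes

variable {α : Type*}

def minimalPrefixes (A : Set (List α)) : Set (List α) :=
  {ρ ∈ A | ∀ ρ' ∈ A, ρ' <+: ρ → ρ' = ρ}

lemma exists_mem_minimalPrefixes_prefix {A : Set (List α)} {ρ : List α} (hρ : ρ ∈ A) :
    ∃ ρ' ∈ minimalPrefixes A, ρ' <+: ρ := by
  obtain ⟨ρ', ⟨hρ'A, hρ'ρ⟩, hmin⟩ := (measure List.length).wf.has_min
    {ρ' | ρ' ∈ A ∧ ρ' <+: ρ} ⟨ρ, hρ, List.prefix_refl ρ⟩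
  refine ⟨ρ', ⟨hρ'A, fun ρ'' hρ''A hρ''ρ' => ?_⟩, hρ'ρ⟩
  exact hρ''ρ'.eq_of_length (le_antisymm hρ''ρ'.length_le
    (not_lt.1 (hmin ρ'' ⟨hρ''A, hρ''ρ'.trans hρ'ρ⟩)))

end MinimalPrefixes

lemma pairwiseDisjoint_cyl_minimalPrefixes (A : Set (List Bool)) :
    (minimalPrefixes A).PairwiseDisjoint cyl := by
  intro ρ₁ h₁ ρ₂ h₂ hne
  refine Set.disjoint_left.2 fun X hX₁ hX₂ => hne ?_
  rcases prefix_or_prefix_of_mem_cyl hX₁ hX₂ with h | h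
  · exact h₂.2 ρ₁ h₁.1 h
  · exact (h₁.2 ρ₂ h₂.1 h).symm

lemma measure_inter_biUnion_lt_mul {Ω ι : Type*} [MeasurableSpace Ω] {μ : Measure Ω}
    {Q : Set Ω} {ε : ℝ≥0∞} {M : Set ι} {C : ι → Set Ω} (hM : M.Countable)
    (hd : M.PairwiseDisjoint C) (hC : ∀ i ∈ M, MeasurableSet (C i))
    (hfin : μ (⋃ i ∈ M, C i) ≠ ∞) {i₀ : ι} (hi₀ : i₀ ∈ M)
    (hlt : ∀ i ∈ M, μ (Q ∩ C i) < ε * μ (C i)) :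
    μ (Q ∩ ⋃ i ∈ M, C i) < ε * μ (⋃ i ∈ M, C i) := by
  have hsum : ∑' i : M, μ (Q ∩ C i) ≠ ∞ := by
    refine ne_top_of_le_ne_top ?_
      (ENNReal.tsum_le_tsum fun i => measure_mono Set.inter_subset_right)
    rwa [← measure_biUnion hM hd hC]
  calc μ (Q ∩ ⋃ i ∈ M, C i) = μ (⋃ i ∈ M, Q ∩ C i) := by rw [Set.inter_iUnion₂]
    _ ≤ ∑' i : M, μ (Q ∩ C i) := measure_biUnion_le μ hM _
    _ < ∑' i : M, ε * μ (C i) :=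
      ENNReal.tsum_lt_tsum (i := ⟨i₀, hi₀⟩) hsum (fun i => (hlt i i.2).le) (hlt i₀ hi₀)
    _ = ε * μ (⋃ i ∈ M, C i) := by rw [ENNReal.tsum_mul_left, measure_biUnion hM hd hC]

lemma relMeas_le_one (μ : Measure (ℕ → Bool)) (τ : List Bool) (P : Set (ℕ → Bool)) :
    relMeas μ τ P ≤ 1 :=
  ENNReal.div_le_of_le_mul (by simpa using measure_mono Set.inter_subset_right)

lemma measure_inter_iUnion_minimalPrefixes_lt {μ : Measure (ℕ → Bool)} [IsFiniteMeasure μ]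
    (hμ0 : ∀ ρ, μ (cyl ρ) ≠ 0) {ε : ℝ≥0∞} (hε : 0 < ε) (Q : Set (ℕ → Bool)) (τ : List Bool) :
    μ (Q ∩ ⋃ ρ ∈ minimalPrefixes {ρ | τ <+: ρ ∧ relMeas μ ρ Q < ε}, cyl ρ) < ε * μ (cyl τ) := by
  set M := minimalPrefixes {ρ | τ <+: ρ ∧ relMeas μ ρ Q < ε}
  rcases M.eq_empty_or_nonempty with hM | ⟨ρ₀, hρ₀⟩
  · simpa [hM] using ENNReal.mul_pos hε.ne' (hμ0 τ)
  have hlt : ∀ ρ ∈ M, μ (Q ∩ cyl ρ) < ε * μ (cyl ρ) := fun ρ hρ =>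
    (ENNReal.div_lt_iff (Or.inl (hμ0 ρ)) (Or.inl (measure_ne_top μ _))).1 hρ.1.2
  calc _ < ε * μ (⋃ ρ ∈ M, cyl ρ) :=
        measure_inter_biUnion_lt_mul M.to_countable (pairwiseDisjoint_cyl_minimalPrefixes _)
          (fun ρ _ => measurableSet_cyl ρ) (measure_ne_top μ _) hρ₀ hlt
    _ ≤ ε * μ (cyl τ) := by
      gcongr
      exact Set.iUnion₂_subset fun ρ hρ => cyl_subset_cyl hρ.1.1

lemma inter_cyl_subset_union {p : List Bool → Prop} {Q : Set (ℕ → Bool)} {σ τ : List Bool}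
    (hστ : σ <+: τ) {X₀ : ℕ → Bool} (hX₀ : X₀ ∈ cyl τ) (hp : ∀ n ≥ σ.length, p (pre X₀ n)) :
    Q ∩ cyl τ ⊆ {X ∈ Q ∩ cyl σ | ∀ n ≥ σ.length, p (pre X n)} ∩ cyl τ ∪
      Q ∩ ⋃ ρ ∈ minimalPrefixes {ρ | τ <+: ρ ∧ ¬ p ρ}, cyl ρ := by
  rintro X ⟨hXQ, hXτ⟩
  by_cases hX : ∀ n ≥ σ.length, p (pre X n)
  · exact Or.inl ⟨⟨⟨hXQ, cyl_subset_cyl hστ hXτ⟩, hX⟩, hXτ⟩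
  obtain ⟨n, hnσ, hn⟩ := not_forall₂.1 hX
  have hτn : τ.length ≤ n := by
    by_contra! h
    exact hn (pre_eq_pre_of_mem_cyl hXτ hX₀ h.le ▸ hp n hnσ)
  obtain ⟨ρ, hρ, hρX⟩ := exists_mem_minimalPrefixes_prefix
    (A := {ρ | τ <+: ρ ∧ ¬ p ρ}) ⟨prefix_pre_of_mem_cyl hXτ hτn, hn⟩
  exact Or.inr ⟨hXQ, Set.mem_biUnion hρ (cyl_subset_cyl hρX (mem_cyl_pre X n))⟩

lemma relMeas_lt_relMeas_add {μ : Measure (ℕ → Bool)} [IsFiniteMeasure μ]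
    (hμ0 : ∀ ρ, μ (cyl ρ) ≠ 0) {Q : Set (ℕ → Bool)} {ε : ℝ≥0∞} (hε : 0 < ε)
    {σ τ : List Bool} (hστ : σ <+: τ) {X₀ : ℕ → Bool} (hX₀ : X₀ ∈ cyl τ)
    (hgood : ∀ n ≥ σ.length, ε ≤ relMeas μ (pre X₀ n) Q) :
    relMeas μ τ Q <
      relMeas μ τ {X ∈ Q ∩ cyl σ | ∀ n ≥ σ.length, ε ≤ relMeas μ (pre X n) Q} + ε := by
  set Qes := {X ∈ Q ∩ cyl σ | ∀ n ≥ σ.length, ε ≤ relMeas μ (pre X n) Q}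
  have hcover := inter_cyl_subset_union (p := fun ρ => ε ≤ relMeas μ ρ Q) (Q := Q) hστ hX₀ hgood
  simp only [not_le] at hcover
  have hmeas : μ (Q ∩ cyl τ) < μ (Qes ∩ cyl τ) + ε * μ (cyl τ) :=
    calc μ (Q ∩ cyl τ) ≤ _ := measure_mono hcover
      _ ≤ _ := measure_union_le _ _
      _ < _ := ENNReal.add_lt_add_left (measure_ne_top μ _)
        (measure_inter_iUnion_minimalPrefixes_lt hμ0 hε Q τ)
  have h0 := hμ0 τ
  have htop := measure_ne_top μ (cyl τ)
  calc relMeas μ τ Q < (μ (Qes ∩ cyl τ) + ε * μ (cyl τ)) / μ (cyl τ) :=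
        ENNReal.div_lt_div_right h0 htop hmeas
    _ = relMeas μ τ Qes + ε := by rw [ENNReal.add_div, ENNReal.mul_div_cancel_right h0 htop]; rfl

theorem stmt4_general (μ : Measure (ℕ → Bool))
    (hμ : ∀ τ : List Bool, μ (cyl τ) = (2 : ℝ≥0∞)⁻¹ ^ τ.length)
    (Q : Set (ℕ → Bool)) (σ : List Bool)
    (ε : ℝ≥0∞) (hε : 0 < ε)
    (Qes : Set (ℕ → Bool))
    (hQes : Qes = {X ∈ Q ∩ cyl σ | ∀ n ≥ σ.length, ε ≤ relMeas μ (pre X n) Q})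
    (τ : List Bool) (hτ : σ <+: τ) (hne : (cyl τ ∩ Qes).Nonempty) :
    relMeas μ τ Q - ε < relMeas μ τ Qes := by
  subst hQes
  obtain ⟨X₀, hX₀τ, -, hX₀good⟩ := hne
  have : IsProbabilityMeasure μ := ⟨by simpa using hμ []⟩
  have hμ0 : ∀ ρ, μ (cyl ρ) ≠ 0 := fun ρ => by simp [hμ]
  have hετ : ε ≤ relMeas μ τ Q := by
    simpa [mem_cyl_iff_pre_eq.1 hX₀τ] using hX₀good τ.length hτ.length_le
  have hεtop : ε ≠ ∞ := ne_top_of_le_ne_top ENNReal.one_ne_top (hετ.trans (relMeas_le_one μ τ Q))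
  rw [ENNReal.sub_lt_iff_lt_right hεtop hετ]
  exact relMeas_lt_relMeas_add hμ0 hε hτ hX₀τ hX₀good

theorem stmt4 (μ : Measure (ℕ → Bool))
    (hμ : ∀ τ : List Bool, μ (cyl τ) = (2 : ℝ≥0∞)⁻¹ ^ τ.length)
    (Q : Set (ℕ → Bool)) (hQ : MeasurableSet Q) (σ : List Bool)
    (ε : ℝ≥0∞) (hε : 0 < ε)
    (Qes : Set (ℕ → Bool))
    (hQes : Qes = {X ∈ Q ∩ cyl σ | ∀ n ≥ σ.length, ε ≤ relMeas μ (pre X n) Q})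
    (τ : List Bool) (hτ : σ <+: τ) (hne : (cyl τ ∩ Qes).Nonempty) :
    relMeas μ τ Q - ε < relMeas μ τ Qes :=
  stmt4_general μ hμ Q σ ε hε Qes hQes τ hτ hne
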